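/- Fix constants $a_A, a_B, a_{AB} > 0$ with $a_{AB}^2 \le a_A a_B$, $\bar a \ge \max\{a_A,a_B,a_{AB}\}$, volume $|\Lambda| > 0$, density $\rho > 0$, cutoff $K_z \ge 1$, and chemical potentials $\mu_A, \mu_B \in \mathbb{R}$. Define for $r_A, r_B \ge 0$: $G(r_A,r_B) = r_A^2 a_A^2 + 2 r_A r_B a_{AB}^2 + r_B^2 a_B^2$, $I(r_A,r_B) = (8\pi)^{5/2}\frac{2\sqrt2}{15\pi^2}(\mu_+^{5/2}+\mu_-^{5/2})$ with $\mu_\pm$ determined by $\xi = 2r_Ar_B(a_Aa_B - a_{AB}^2)/G$, and $F(r_A,r_B) = \frac{8\pi\bar a}{|\Lambda|}(\rho\bar a^3)^{1/4}(r_A^2+r_B^2) + |\Lambda|^{-3/2}G^{5/4}I(r_A,r_B) - \mu_A r_A - \mu_B r_B$. Then for $\rho\bar a^3$ sufficiently small, $F$ is convex on the region $\{(r_A,r_B) : r_A, r_B > 0,\ r_A + r_B \le C K_z \rho|\Lambda|\}$. -/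

import Mathlib

/-- `G(r_A,r_B) = r_A²a_A² + 2r_Ar_Ba_AB² + r_B²a_B²`. -/
noncomputable def Gfun (aA aB aAB rA rB : ℝ) : ℝ :=
  rA ^ 2 * aA ^ 2 + 2 * rA * rB * aAB ^ 2 + rB ^ 2 * aB ^ 2

/-- `ξ(r_A,r_B) = 2r_Ar_B(a_Aa_B - a_AB²)/G(r_A,r_B)`. -/
noncomputable def xiFun (aA aB aAB rA rB : ℝ) : ℝ :=
  2 * rA * rB * (aA * aB - aAB ^ 2) / Gfun aA aB aAB rA rB

/-- `μ₊ = ½(√(1+ξ) + √(1-ξ))`. -/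
noncomputable def muPlus (aA aB aAB rA rB : ℝ) : ℝ :=
  (1 / 2) * (Real.sqrt (1 + xiFun aA aB aAB rA rB) + Real.sqrt (1 - xiFun aA aB aAB rA rB))

/-- `μ₋ = ½(√(1+ξ) - √(1-ξ))`. -/
noncomputable def muMinus (aA aB aAB rA rB : ℝ) : ℝ :=
  (1 / 2) * (Real.sqrt (1 + xiFun aA aB aAB rA rB) - Real.sqrt (1 - xiFun aA aB aAB rA rB))

/-- `I(r_A,r_B) = (8π)^{5/2} (2√2/(15π²)) (μ₊^{5/2} + μ₋^{5/2})`. -/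
noncomputable def Ifun (aA aB aAB rA rB : ℝ) : ℝ :=
  (8 * Real.pi) ^ ((5 : ℝ) / 2) * (2 * Real.sqrt 2 / (15 * Real.pi ^ 2)) *
    ((muPlus aA aB aAB rA rB) ^ ((5 : ℝ) / 2) + (muMinus aA aB aAB rA rB) ^ ((5 : ℝ) / 2))

/-- The energy functional
`F(r_A,r_B) = (8πā/|Λ|)(ρā³)^{1/4}(r_A²+r_B²) + |Λ|^{-3/2}G^{5/4}I(r_A,r_B) - μ_Ar_A - μ_Br_B`. -/
noncomputable def Ffun (aA aB aAB abar vol ρ μA μB rA rB : ℝ) : ℝ :=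
  (8 * Real.pi * abar / vol) * (ρ * abar ^ 3) ^ ((1 : ℝ) / 4) * (rA ^ 2 + rB ^ 2) +
    vol ^ (-(3 : ℝ) / 2) * (Gfun aA aB aAB rA rB) ^ ((5 : ℝ) / 4) * Ifun aA aB aAB rA rB -
    μA * rA - μB * rB

section FfunConvexAux

open Real Set

noncomputable def Tf (aA aB : ℝ) (p : ℝ × ℝ) : ℝ := aA * p.1 + aB * p.2
noncomputable def Pf (aA aB aAB : ℝ) (p : ℝ × ℝ) : ℝ := (aA * aB - aAB ^ 2) * (p.1 * p.2)
noncomputable def Df (aA aB aAB : ℝ) (p : ℝ × ℝ) : ℝ :=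
  Real.sqrt (Tf aA aB p ^ 2 - 4 * Pf aA aB aAB p)
noncomputable def lamP (aA aB aAB : ℝ) (p : ℝ × ℝ) : ℝ := (Tf aA aB p + Df aA aB aAB p) / 2
noncomputable def lamM (aA aB aAB : ℝ) (p : ℝ × ℝ) : ℝ := (Tf aA aB p - Df aA aB aAB p) / 2
noncomputable def Phi (aA aB aAB : ℝ) (p : ℝ × ℝ) : ℝ :=
  lamP aA aB aAB p ^ ((5:ℝ)/2) + lamM aA aB aAB p ^ ((5:ℝ)/2)

noncomputable def x11 (aA aAB : ℝ) (p : ℝ × ℝ) : ℝ := aA * p.1 + (aAB ^ 2 / aA) * p.2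
noncomputable def x22 (aA aB aAB : ℝ) (p : ℝ × ℝ) : ℝ := (aB - aAB ^ 2 / aA) * p.2
noncomputable def x12 (aA aB aAB : ℝ) (p : ℝ × ℝ) : ℝ :=
  (aAB * Real.sqrt (aB - aAB ^ 2 / aA) / Real.sqrt aA) * p.2
noncomputable def Qf (aA aB aAB : ℝ) (u p : ℝ × ℝ) : ℝ :=
  u.1 ^ 2 * x11 aA aAB p + 2 * u.1 * u.2 * x12 aA aB aAB p + u.2 ^ 2 * x22 aA aB aAB p

lemma quad_nonneg (A B C u1 u2 : ℝ) (hAC : A * C = B ^ 2) (hsum : 0 ≤ A + C) :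
    0 ≤ u1 ^ 2 * A + 2 * u1 * u2 * B + u2 ^ 2 * C := by
  have hA0 : 0 ≤ A := by nlinarith [sq_nonneg B]
  have hC0 : 0 ≤ C := by nlinarith [sq_nonneg B]
  rcases eq_or_lt_of_le hA0 with h | h
  · have hB2 : B ^ 2 = 0 := by rw [← hAC, ← h]; ring
    have hB : B = 0 := by
      have := sq_nonneg B; nlinarith [sq_nonneg B]
    rw [hB, ← h]
    nlinarith [mul_nonneg (sq_nonneg u2) hC0]
  · have key : A * (u1 ^ 2 * A + 2 * u1 * u2 * B + u2 ^ 2 * C) = (u1 * A + u2 * B) ^ 2 := by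
      linear_combination u2 ^ 2 * hAC
    nlinarith [sq_nonneg (u1 * A + u2 * B), key]

section basics
variable {aA aB aAB : ℝ} (hA : 0 < aA) (hB : 0 < aB) (hAB : 0 < aAB)
  (hm : aAB ^ 2 ≤ aA * aB) (p : ℝ × ℝ) (hp1 : 0 ≤ p.1) (hp2 : 0 ≤ p.2)

include hA hB hAB hm hp1 hp2

lemma Tf_nonneg : 0 ≤ Tf aA aB p := by
  simp only [Tf]; positivity

lemma Pf_nonneg : 0 ≤ Pf aA aB aAB p := by
  simp only [Pf]; have : 0 ≤ aA * aB - aAB ^ 2 := by linarith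
  positivity

lemma disc_nonneg : 0 ≤ Tf aA aB p ^ 2 - 4 * Pf aA aB aAB p := by
  simp only [Tf, Pf]
  nlinarith [sq_nonneg (aA * p.1 - aB * p.2),
    mul_nonneg (mul_nonneg (sq_nonneg aAB) hp1) hp2]

lemma Df_sq : Df aA aB aAB p ^ 2 = Tf aA aB p ^ 2 - 4 * Pf aA aB aAB p :=
  Real.sq_sqrt (disc_nonneg hA hB hAB hm p hp1 hp2)

lemma Df_le_Tf : Df aA aB aAB p ≤ Tf aA aB p := by
  have h1 : Df aA aB aAB p ≤ Real.sqrt (Tf aA aB p ^ 2) := by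
    apply Real.sqrt_le_sqrt
    have := Pf_nonneg hA hB hAB hm p hp1 hp2
    linarith
  rwa [Real.sqrt_sq (Tf_nonneg hA hB hAB hm p hp1 hp2)] at h1

lemma lamM_nonneg : 0 ≤ lamM aA aB aAB p := by
  have := Df_le_Tf hA hB hAB hm p hp1 hp2
  simp only [lamM]; linarith

lemma lamP_root : lamP aA aB aAB p ^ 2 - Tf aA aB p * lamP aA aB aAB p + Pf aA aB aAB p = 0 := by
  have hD := Df_sq hA hB hAB hm p hp1 hp2
  simp only [lamP]
  linear_combination (1/4) * hD

lemma lamM_root : lamM aA aB aAB p ^ 2 - Tf aA aB p * lamM aA aB aAB p + Pf aA aB aAB p = 0 := by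
  have hD := Df_sq hA hB hAB hm p hp1 hp2
  simp only [lamM]
  linear_combination (1/4) * hD

end basics
set_option linter.unusedSectionVars false
set_option linter.deprecated false

section xent
variable {aA aB aAB : ℝ} (hA : 0 < aA) (hB : 0 < aB) (hAB : 0 < aAB)
  (hm : aAB ^ 2 ≤ aA * aB) (p : ℝ × ℝ)

include hA hm

lemma hbb : 0 ≤ aB - aAB ^ 2 / aA := by
  rw [sub_nonneg, div_le_iff₀ hA]; nlinarith

lemma x_trace : x11 aA aAB p + x22 aA aB aAB p = Tf aA aB p := by
  simp only [x11, x22, Tf]; field_simp; ring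

lemma x12_sq : x12 aA aB aAB p ^ 2 = aAB ^ 2 * (aB - aAB ^ 2 / aA) / aA * p.2 ^ 2 := by
  simp only [x12]
  rw [mul_pow, div_pow, mul_pow, Real.sq_sqrt (hbb hA hm), Real.sq_sqrt hA.le]

lemma x_det : x11 aA aAB p * x22 aA aB aAB p - x12 aA aB aAB p ^ 2 = Pf aA aB aAB p := by
  rw [x12_sq hA hm]
  simp only [x11, x22, Pf]
  field_simp
  ring

end xent

section rayleigh
variable {aA aB aAB : ℝ} (hA : 0 < aA) (hB : 0 < aB) (hAB : 0 < aAB)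
  (hm : aAB ^ 2 ≤ aA * aB) (p : ℝ × ℝ) (hp1 : 0 ≤ p.1) (hp2 : 0 ≤ p.2)

include hA hB hAB hm hp1 hp2

lemma sum_eig : lamP aA aB aAB p + lamM aA aB aAB p = Tf aA aB p := by
  simp only [lamP, lamM]; ring

lemma rayleigh (u : ℝ × ℝ) (hu : u.1 ^ 2 + u.2 ^ 2 = 1) :
    lamM aA aB aAB p ≤ Qf aA aB aAB u p ∧ Qf aA aB aAB u p ≤ lamP aA aB aAB p := by
  have htr := x_trace (aB := aB) hA hm p
  have hdet := x_det (aB := aB) hA hm p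
  have hrootM := lamM_root hA hB hAB hm p hp1 hp2
  have hrootP := lamP_root hA hB hAB hm p hp1 hp2
  have hDnn : 0 ≤ Df aA aB aAB p := Real.sqrt_nonneg _
  constructor
  · have hAC : (x11 aA aAB p - lamM aA aB aAB p) * (x22 aA aB aAB p - lamM aA aB aAB p)
        = x12 aA aB aAB p ^ 2 := by
      linear_combination hdet - lamM aA aB aAB p * htr + hrootM
    have hsum : 0 ≤ (x11 aA aAB p - lamM aA aB aAB p) + (x22 aA aB aAB p - lamM aA aB aAB p) := by
      have : (x11 aA aAB p - lamM aA aB aAB p) + (x22 aA aB aAB p - lamM aA aB aAB p)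
          = Df aA aB aAB p := by
        rw [show x11 aA aAB p - lamM aA aB aAB p + (x22 aA aB aAB p - lamM aA aB aAB p)
          = (x11 aA aAB p + x22 aA aB aAB p) - 2 * lamM aA aB aAB p by ring, htr]
        simp only [lamM]; ring
      linarith
    have h := quad_nonneg _ _ _ u.1 u.2 hAC hsum
    have heq : u.1 ^ 2 * (x11 aA aAB p - lamM aA aB aAB p) + 2 * u.1 * u.2 * x12 aA aB aAB p
        + u.2 ^ 2 * (x22 aA aB aAB p - lamM aA aB aAB p)
        = Qf aA aB aAB u p - lamM aA aB aAB p := by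
      simp only [Qf]; linear_combination (-(lamM aA aB aAB p)) * hu
    linarith [heq ▸ h]
  · have hAC : (lamP aA aB aAB p - x11 aA aAB p) * (lamP aA aB aAB p - x22 aA aB aAB p)
        = (-(x12 aA aB aAB p)) ^ 2 := by
      linear_combination hrootP - lamP aA aB aAB p * htr + hdet
    have hsum : 0 ≤ (lamP aA aB aAB p - x11 aA aAB p) + (lamP aA aB aAB p - x22 aA aB aAB p) := by
      have : (lamP aA aB aAB p - x11 aA aAB p) + (lamP aA aB aAB p - x22 aA aB aAB p)
          = Df aA aB aAB p := by
        rw [show (lamP aA aB aAB p - x11 aA aAB p) + (lamP aA aB aAB p - x22 aA aB aAB p)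
          = 2 * lamP aA aB aAB p - (x11 aA aAB p + x22 aA aB aAB p) by ring, htr]
        simp only [lamP]; ring
      linarith
    have h := quad_nonneg _ _ _ u.1 u.2 hAC hsum
    have heq : u.1 ^ 2 * (lamP aA aB aAB p - x11 aA aAB p)
        + 2 * u.1 * u.2 * (-(x12 aA aB aAB p))
        + u.2 ^ 2 * (lamP aA aB aAB p - x22 aA aB aAB p)
        = lamP aA aB aAB p - Qf aA aB aAB u p := by
      simp only [Qf]; linear_combination (lamP aA aB aAB p) * hu
    linarith [heq ▸ h]

lemma exists_eigen : ∃ u : ℝ × ℝ, u.1 ^ 2 + u.2 ^ 2 = 1 ∧ Qf aA aB aAB u p = lamP aA aB aAB p := by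
  have htr := x_trace (aB := aB) hA hm p
  have hdet := x_det (aB := aB) hA hm p
  have hrootP := lamP_root hA hB hAB hm p hp1 hp2
  set A0 := x11 aA aAB p with hA0def
  set B := x12 aA aB aAB p with hBdef
  set C0 := x22 aA aB aAB p with hC0def
  set l := lamP aA aB aAB p with hldef
  have hkey : (l - A0) * (l - C0) = B ^ 2 := by
    linear_combination hrootP - l * htr + hdet
  by_cases hn : B ^ 2 + (l - A0) ^ 2 = 0
  · have hB0 : B = 0 := by nlinarith [sq_nonneg B, sq_nonneg (l - A0)]
    have hlA : l = A0 := by nlinarith [sq_nonneg B, sq_nonneg (l - A0)]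
    refine ⟨(1, 0), by norm_num, ?_⟩
    simp only [Qf, ← hA0def, ← hBdef, ← hC0def]
    norm_num
    exact hlA.symm
  · have hn' : 0 < B ^ 2 + (l - A0) ^ 2 := lt_of_le_of_ne (by positivity) (Ne.symm hn)
    set n := Real.sqrt (B ^ 2 + (l - A0) ^ 2) with hndef
    have hnpos : 0 < n := Real.sqrt_pos.2 hn'
    have hn2 : n ^ 2 = B ^ 2 + (l - A0) ^ 2 := Real.sq_sqrt hn'.le
    refine ⟨(B / n, (l - A0) / n), ?_, ?_⟩
    · show (B / n) ^ 2 + ((l - A0) / n) ^ 2 = 1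
      field_simp
      linarith [hn2]
    · have hq : B ^ 2 * A0 + 2 * (B * (l - A0)) * B + (l - A0) ^ 2 * C0
          = l * (B ^ 2 + (l - A0) ^ 2) := by
        linear_combination (A0 - l) * hkey
      show (B / n) ^ 2 * A0 + 2 * (B / n) * ((l - A0) / n) * B + ((l - A0) / n) ^ 2 * C0 = l
      have hnne : n ≠ 0 := hnpos.ne'
      have hsplit : (B / n) ^ 2 * A0 + 2 * (B / n) * ((l - A0) / n) * B + ((l - A0) / n) ^ 2 * C0
          = (B ^ 2 * A0 + 2 * (B * (l - A0)) * B + (l - A0) ^ 2 * C0) / n ^ 2 := by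
        field_simp
      rw [hsplit, hq, ← hn2, mul_div_assoc, div_self (pow_ne_zero 2 hnne), mul_one]

end rayleigh

lemma maj {α β s : ℝ} (hβ : 0 ≤ β) (h1 : β ≤ s) (h2 : s ≤ α) :
    s ^ ((5:ℝ)/2) + (α + β - s) ^ ((5:ℝ)/2) ≤ α ^ ((5:ℝ)/2) + β ^ ((5:ℝ)/2) := by
  have hg : ConvexOn ℝ (Set.Ici (0:ℝ)) fun x : ℝ => x ^ ((5:ℝ)/2) :=
    convexOn_rpow (by norm_num)
  have hα : 0 ≤ α := hβ.trans (h1.trans h2)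
  rcases eq_or_lt_of_le (h1.trans h2 : β ≤ α) with heq | hlt
  · have hs : s = α := le_antisymm h2 (heq ▸ h1)
    rw [hs, show α + β - α = β by ring]
  · set t := (s - β) / (α - β) with htdef
    have hd : 0 < α - β := by linarith
    have ht0 : 0 ≤ t := div_nonneg (by linarith) hd.le
    have ht1 : t ≤ 1 := (div_le_one hd).2 (by linarith)
    have e1 : t * α + (1 - t) * β = s := by
      rw [htdef]; field_simp; ring
    have e2 : (1 - t) * α + t * β = α + β - s := by
      rw [htdef]; field_simp; ring
    have c1 : (t * α + (1 - t) * β) ^ ((5:ℝ)/2)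
        ≤ t * α ^ ((5:ℝ)/2) + (1 - t) * β ^ ((5:ℝ)/2) := by
      have h := hg.2 (Set.mem_Ici.2 hα) (Set.mem_Ici.2 hβ) ht0
        (by linarith : (0:ℝ) ≤ 1 - t) (by ring)
      simpa using h
    have c2 : ((1 - t) * α + t * β) ^ ((5:ℝ)/2)
        ≤ (1 - t) * α ^ ((5:ℝ)/2) + t * β ^ ((5:ℝ)/2) := by
      have h := hg.2 (Set.mem_Ici.2 hα) (Set.mem_Ici.2 hβ)
        (by linarith : (0:ℝ) ≤ 1 - t) ht0 (by ring)
      simpa using h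
    rw [e1] at c1
    rw [e2] at c2
    linarith

lemma Phi_convexOn {aA aB aAB : ℝ} (hA : 0 < aA) (hB : 0 < aB) (hAB : 0 < aAB)
    (hm : aAB ^ 2 ≤ aA * aB) :
    ConvexOn ℝ {p : ℝ × ℝ | 0 ≤ p.1 ∧ 0 ≤ p.2} (Phi aA aB aAB) := by
  have hSconv : Convex ℝ {p : ℝ × ℝ | 0 ≤ p.1 ∧ 0 ≤ p.2} := by
    rintro x ⟨hx1, hx2⟩ y ⟨hy1, hy2⟩ a b ha hb hab
    constructor
    · show 0 ≤ (a • x + b • y).1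
      simp only [Prod.fst_add, Prod.smul_fst, smul_eq_mul]
      exact add_nonneg (mul_nonneg ha hx1) (mul_nonneg hb hy1)
    · show 0 ≤ (a • x + b • y).2
      simp only [Prod.snd_add, Prod.smul_snd, smul_eq_mul]
      exact add_nonneg (mul_nonneg ha hx2) (mul_nonneg hb hy2)
  refine ⟨hSconv, ?_⟩
  rintro x hx y hy a b ha hb hab
  obtain ⟨hx1, hx2⟩ := hx
  obtain ⟨hy1, hy2⟩ := hy
  have hzmem := hSconv ⟨hx1, hx2⟩ ⟨hy1, hy2⟩ ha hb hab
  obtain ⟨hz1, hz2⟩ := hzmem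
  set z := a • x + b • y with hzdef
  have hz1' : z.1 = a * x.1 + b * y.1 := by
    simp [hzdef, Prod.fst_add, Prod.smul_fst, smul_eq_mul]
  have hz2' : z.2 = a * x.2 + b * y.2 := by
    simp [hzdef, Prod.snd_add, Prod.smul_snd, smul_eq_mul]
  obtain ⟨u, hu, hQz⟩ := exists_eigen hA hB hAB hm z hz1 hz2
  -- linearity
  have hlinQ : Qf aA aB aAB u z = a * Qf aA aB aAB u x + b * Qf aA aB aAB u y := by
    simp only [Qf, x11, x12, x22, hz1', hz2']; ring
  have hlinT : Tf aA aB z = a * Tf aA aB x + b * Tf aA aB y := by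
    simp only [Tf, hz1', hz2']; ring
  -- Rayleigh bounds at x and y
  obtain ⟨hxl, hxu⟩ := rayleigh hA hB hAB hm x hx1 hx2 u hu
  obtain ⟨hyl, hyu⟩ := rayleigh hA hB hAB hm y hy1 hy2 u hu
  have hlmx := lamM_nonneg hA hB hAB hm x hx1 hx2
  have hlmy := lamM_nonneg hA hB hAB hm y hy1 hy2
  have hsx := sum_eig hA hB hAB hm x hx1 hx2
  have hsy := sum_eig hA hB hAB hm y hy1 hy2
  have hsz := sum_eig hA hB hAB hm z hz1 hz2
  have hQx0 : 0 ≤ Qf aA aB aAB u x := hlmx.trans hxl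
  have hQy0 : 0 ≤ Qf aA aB aAB u y := hlmy.trans hyl
  have hTQx0 : 0 ≤ Tf aA aB x - Qf aA aB aAB u x := by linarith
  have hTQy0 : 0 ≤ Tf aA aB y - Qf aA aB aAB u y := by linarith
  -- Phi z in terms of Q
  have hPhiz : Phi aA aB aAB z = Qf aA aB aAB u z ^ ((5:ℝ)/2)
      + (Tf aA aB z - Qf aA aB aAB u z) ^ ((5:ℝ)/2) := by
    simp only [Phi, hQz]
    congr 1
    congr 1
    linarith
  -- convexity of rpow
  have hg : ConvexOn ℝ (Set.Ici (0:ℝ)) fun x : ℝ => x ^ ((5:ℝ)/2) :=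
    convexOn_rpow (by norm_num)
  have cA := hg.2 (Set.mem_Ici.2 hQx0) (Set.mem_Ici.2 hQy0) ha hb hab
  have cB := hg.2 (Set.mem_Ici.2 hTQx0) (Set.mem_Ici.2 hTQy0) ha hb hab
  simp only [smul_eq_mul] at cA cB
  rw [← hlinQ] at cA
  rw [show a * (Tf aA aB x - Qf aA aB aAB u x) + b * (Tf aA aB y - Qf aA aB aAB u y)
      = Tf aA aB z - Qf aA aB aAB u z by rw [hlinT, hlinQ]; ring] at cB
  -- majorization at x and y
  have mx : Qf aA aB aAB u x ^ ((5:ℝ)/2) + (Tf aA aB x - Qf aA aB aAB u x) ^ ((5:ℝ)/2)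
      ≤ Phi aA aB aAB x := by
    have := maj hlmx hxl hxu
    rw [show lamP aA aB aAB x + lamM aA aB aAB x - Qf aA aB aAB u x
      = Tf aA aB x - Qf aA aB aAB u x by rw [← hsx]] at this
    simpa [Phi] using this
  have my : Qf aA aB aAB u y ^ ((5:ℝ)/2) + (Tf aA aB y - Qf aA aB aAB u y) ^ ((5:ℝ)/2)
      ≤ Phi aA aB aAB y := by
    have := maj hlmy hyl hyu
    rw [show lamP aA aB aAB y + lamM aA aB aAB y - Qf aA aB aAB u y
      = Tf aA aB y - Qf aA aB aAB u y by rw [← hsy]] at this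
    simpa [Phi] using this
  show Phi aA aB aAB z ≤ a • Phi aA aB aAB x + b • Phi aA aB aAB y
  simp only [smul_eq_mul]
  rw [hPhiz]
  nlinarith [mul_le_mul_of_nonneg_left mx ha, mul_le_mul_of_nonneg_left my hb]

section ident
variable {aA aB aAB : ℝ} (hA : 0 < aA) (hB : 0 < aB) (hAB : 0 < aAB)
  (hm : aAB ^ 2 ≤ aA * aB) (p : ℝ × ℝ) (hp1 : 0 < p.1) (hp2 : 0 < p.2)

include hA hB hAB hm hp1 hp2

lemma hGpos : 0 < Gfun aA aB aAB p.1 p.2 := by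
  simp only [Gfun]
  nlinarith [mul_pos (mul_pos (mul_pos two_pos hp1) hp2) (pow_pos hAB 2),
    mul_pos (pow_pos hp1 2) (pow_pos hA 2), mul_pos (pow_pos hp2 2) (pow_pos hB 2)]

lemma hGeq : Gfun aA aB aAB p.1 p.2 = Tf aA aB p ^ 2 - 2 * Pf aA aB aAB p := by
  simp only [Gfun, Tf, Pf]; ring

lemma hxi_eq : xiFun aA aB aAB p.1 p.2 = 2 * Pf aA aB aAB p / Gfun aA aB aAB p.1 p.2 := by
  simp only [xiFun, Pf]; ring_nf

lemma sqrtG_muPlus : Real.sqrt (Gfun aA aB aAB p.1 p.2) * muPlus aA aB aAB p.1 p.2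
    = lamP aA aB aAB p := by
  have hG := hGpos hA hB hAB hm p hp1 hp2
  have hGT := hGeq (aAB := aAB) hA hB hAB hm p hp1 hp2
  have hTnn := Tf_nonneg hA hB hAB hm p hp1.le hp2.le
  have h1p : 1 + xiFun aA aB aAB p.1 p.2 = Tf aA aB p ^ 2 / Gfun aA aB aAB p.1 p.2 := by
    rw [hxi_eq hA hB hAB hm p hp1 hp2]
    field_simp
    linarith [hGT]
  have h1m : 1 - xiFun aA aB aAB p.1 p.2
      = (Tf aA aB p ^ 2 - 4 * Pf aA aB aAB p) / Gfun aA aB aAB p.1 p.2 := by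
    rw [hxi_eq hA hB hAB hm p hp1 hp2]
    field_simp
    linarith [hGT]
  have hs1 : Real.sqrt (1 + xiFun aA aB aAB p.1 p.2)
      = Tf aA aB p / Real.sqrt (Gfun aA aB aAB p.1 p.2) := by
    rw [h1p, Real.sqrt_div (sq_nonneg _), Real.sqrt_sq hTnn]
  have hs2 : Real.sqrt (1 - xiFun aA aB aAB p.1 p.2)
      = Df aA aB aAB p / Real.sqrt (Gfun aA aB aAB p.1 p.2) := by
    rw [h1m, Real.sqrt_div (disc_nonneg hA hB hAB hm p hp1.le hp2.le)]
    rfl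
  have hsG : Real.sqrt (Gfun aA aB aAB p.1 p.2) ≠ 0 := ne_of_gt (Real.sqrt_pos.2 hG)
  simp only [muPlus, hs1, hs2, lamP]
  field_simp

lemma sqrtG_muMinus : Real.sqrt (Gfun aA aB aAB p.1 p.2) * muMinus aA aB aAB p.1 p.2
    = lamM aA aB aAB p := by
  have hG := hGpos hA hB hAB hm p hp1 hp2
  have hGT := hGeq (aAB := aAB) hA hB hAB hm p hp1 hp2
  have hTnn := Tf_nonneg hA hB hAB hm p hp1.le hp2.le
  have h1p : 1 + xiFun aA aB aAB p.1 p.2 = Tf aA aB p ^ 2 / Gfun aA aB aAB p.1 p.2 := by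
    rw [hxi_eq hA hB hAB hm p hp1 hp2]
    field_simp
    linarith [hGT]
  have h1m : 1 - xiFun aA aB aAB p.1 p.2
      = (Tf aA aB p ^ 2 - 4 * Pf aA aB aAB p) / Gfun aA aB aAB p.1 p.2 := by
    rw [hxi_eq hA hB hAB hm p hp1 hp2]
    field_simp
    linarith [hGT]
  have hs1 : Real.sqrt (1 + xiFun aA aB aAB p.1 p.2)
      = Tf aA aB p / Real.sqrt (Gfun aA aB aAB p.1 p.2) := by
    rw [h1p, Real.sqrt_div (sq_nonneg _), Real.sqrt_sq hTnn]
  have hs2 : Real.sqrt (1 - xiFun aA aB aAB p.1 p.2)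
      = Df aA aB aAB p / Real.sqrt (Gfun aA aB aAB p.1 p.2) := by
    rw [h1m, Real.sqrt_div (disc_nonneg hA hB hAB hm p hp1.le hp2.le)]
    rfl
  have hsG : Real.sqrt (Gfun aA aB aAB p.1 p.2) ≠ 0 := ne_of_gt (Real.sqrt_pos.2 hG)
  simp only [muMinus, hs1, hs2, lamM]
  field_simp

lemma muPlus_nonneg : 0 ≤ muPlus aA aB aAB p.1 p.2 := by
  simp only [muPlus]
  positivity

lemma muMinus_nonneg : 0 ≤ muMinus aA aB aAB p.1 p.2 := by
  have hG := hGpos hA hB hAB hm p hp1 hp2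
  have hxin : 0 ≤ xiFun aA aB aAB p.1 p.2 := by
    rw [hxi_eq hA hB hAB hm p hp1 hp2]
    exact div_nonneg (by linarith [Pf_nonneg hA hB hAB hm p hp1.le hp2.le]) hG.le
  have h := Real.sqrt_le_sqrt (by linarith : 1 - xiFun aA aB aAB p.1 p.2
    ≤ 1 + xiFun aA aB aAB p.1 p.2)
  simp only [muMinus]
  linarith

lemma G_pow_I : Gfun aA aB aAB p.1 p.2 ^ ((5:ℝ)/4)
    * (muPlus aA aB aAB p.1 p.2 ^ ((5:ℝ)/2) + muMinus aA aB aAB p.1 p.2 ^ ((5:ℝ)/2))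
    = Phi aA aB aAB p := by
  have hG := hGpos hA hB hAB hm p hp1 hp2
  have e1 : Gfun aA aB aAB p.1 p.2 ^ ((5:ℝ)/4)
      = Real.sqrt (Gfun aA aB aAB p.1 p.2) ^ ((5:ℝ)/2) := by
    rw [Real.sqrt_eq_rpow, ← Real.rpow_mul hG.le]
    norm_num
  rw [mul_add, e1,
    ← Real.mul_rpow (Real.sqrt_nonneg _) (muPlus_nonneg hA hB hAB hm p hp1 hp2),
    ← Real.mul_rpow (Real.sqrt_nonneg _) (muMinus_nonneg hA hB hAB hm p hp1 hp2),
    sqrtG_muPlus hA hB hAB hm p hp1 hp2, sqrtG_muMinus hA hB hAB hm p hp1 hp2]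
  rfl

end ident

lemma Ffun_eq {aA aB aAB : ℝ} (hA : 0 < aA) (hB : 0 < aB) (hAB : 0 < aAB)
    (hm : aAB ^ 2 ≤ aA * aB) (abar vol ρ μA μB : ℝ) (p : ℝ × ℝ)
    (hp1 : 0 < p.1) (hp2 : 0 < p.2) :
    Ffun aA aB aAB abar vol ρ μA μB p.1 p.2 =
      (8 * Real.pi * abar / vol) * (ρ * abar ^ 3) ^ ((1 : ℝ) / 4) * (p.1 ^ 2 + p.2 ^ 2)
      + (vol ^ (-(3 : ℝ) / 2) * ((8 * Real.pi) ^ ((5 : ℝ) / 2)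
          * (2 * Real.sqrt 2 / (15 * Real.pi ^ 2)))) * Phi aA aB aAB p
      - μA * p.1 - μB * p.2 := by
  have hGI := G_pow_I hA hB hAB hm p hp1 hp2
  simp only [Ffun, Ifun]
  rw [show vol ^ (-(3 : ℝ) / 2) * Gfun aA aB aAB p.1 p.2 ^ ((5 : ℝ) / 4) *
      ((8 * Real.pi) ^ ((5 : ℝ) / 2) * (2 * Real.sqrt 2 / (15 * Real.pi ^ 2)) *
        (muPlus aA aB aAB p.1 p.2 ^ ((5 : ℝ) / 2) + muMinus aA aB aAB p.1 p.2 ^ ((5 : ℝ) / 2)))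
      = (vol ^ (-(3 : ℝ) / 2) * ((8 * Real.pi) ^ ((5 : ℝ) / 2)
          * (2 * Real.sqrt 2 / (15 * Real.pi ^ 2)))) *
        (Gfun aA aB aAB p.1 p.2 ^ ((5 : ℝ) / 4) *
          (muPlus aA aB aAB p.1 p.2 ^ ((5 : ℝ) / 2)
            + muMinus aA aB aAB p.1 p.2 ^ ((5 : ℝ) / 2))) by ring, hGI]

lemma combo_pos {a b x y : ℝ} (ha : 0 ≤ a) (hb : 0 ≤ b) (hab : a + b = 1)
    (hx : 0 < x) (hy : 0 < y) : 0 < a * x + b * y := by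
  rcases eq_or_lt_of_le ha with h | h
  · have hb1 : b = 1 := by linarith
    rw [← h, hb1]; simpa using hy
  · nlinarith [mul_pos h hx, mul_nonneg hb hy.le]

end FfunConvexAux

set_option maxHeartbeats 2000000 in
/-- Convexity of the energy functional `F` on the region
`{r_A, r_B > 0, r_A + r_B ≤ C K_z ρ|Λ|}` (with `K_z = (ρā³)^{-ν}`) for
`ρā³` sufficiently small. -/
theorem Ffun_convexOn (aA aB aAB C ν : ℝ)
    (hA : 0 < aA) (hB : 0 < aB) (hAB : 0 < aAB) (hmisc : aAB ^ 2 ≤ aA * aB)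
    (hC : 0 < C) (hν : 0 < ν) :
    ∃ ε > (0 : ℝ), ∀ abar vol ρ μA μB : ℝ,
      0 < abar → 0 < vol → 0 < ρ →
      aA ≤ abar → aB ≤ abar → aAB ≤ abar →
      ρ * abar ^ 3 ≤ ε →
      ConvexOn ℝ
        {p : ℝ × ℝ | 0 < p.1 ∧ 0 < p.2 ∧
          p.1 + p.2 ≤ C * (ρ * abar ^ 3) ^ (-ν) * ρ * vol}
        (fun p : ℝ × ℝ => Ffun aA aB aAB abar vol ρ μA μB p.1 p.2) := by
  refine ⟨1, one_pos, ?_⟩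
  intro abar vol ρ μA μB habar hvol hρ _ _ _ _
  set K := C * (ρ * abar ^ 3) ^ (-ν) * ρ * vol with hK
  have hRconv : Convex ℝ {p : ℝ × ℝ | 0 < p.1 ∧ 0 < p.2 ∧ p.1 + p.2 ≤ K} := by
    rintro x ⟨hx1, hx2, hx3⟩ y ⟨hy1, hy2, hy3⟩ a b ha hb hab
    have e1 : (a • x + b • y).1 = a * x.1 + b * y.1 := by
      simp [Prod.fst_add, Prod.smul_fst, smul_eq_mul]
    have e2 : (a • x + b • y).2 = a * x.2 + b * y.2 := by
      simp [Prod.snd_add, Prod.smul_snd, smul_eq_mul]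
    refine ⟨?_, ?_, ?_⟩
    · rw [e1]; exact combo_pos ha hb hab hx1 hy1
    · rw [e2]; exact combo_pos ha hb hab hx2 hy2
    · rw [e1, e2]
      have h1 := mul_le_mul_of_nonneg_left hx3 ha
      have h2 := mul_le_mul_of_nonneg_left hy3 hb
      have hKe : a * K + b * K = K := by rw [← add_mul, hab, one_mul]
      nlinarith
  refine ⟨hRconv, ?_⟩
  rintro x hx y hy a b ha hb hab
  obtain ⟨hx1, hx2, hx3⟩ := hx
  obtain ⟨hy1, hy2, hy3⟩ := hy
  obtain ⟨hz1, hz2, hz3⟩ := hRconv ⟨hx1, hx2, hx3⟩ ⟨hy1, hy2, hy3⟩ ha hb hab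
  have hz1' : (a • x + b • y).1 = a * x.1 + b * y.1 := by
    simp [Prod.fst_add, Prod.smul_fst, smul_eq_mul]
  have hz2' : (a • x + b • y).2 = a * x.2 + b * y.2 := by
    simp [Prod.snd_add, Prod.smul_snd, smul_eq_mul]
  have hPhiC := Phi_convexOn hA hB hAB hmisc
  have hphi := hPhiC.2 (x := x) ⟨hx1.le, hx2.le⟩ (y := y) ⟨hy1.le, hy2.le⟩ ha hb hab
  simp only [smul_eq_mul] at hphi
  have hquad : (a • x + b • y).1 ^ 2 + (a • x + b • y).2 ^ 2
      ≤ a * (x.1 ^ 2 + x.2 ^ 2) + b * (y.1 ^ 2 + y.2 ^ 2) := by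
    rw [hz1', hz2']
    nlinarith [mul_nonneg (mul_nonneg ha hb) (sq_nonneg (x.1 - y.1)),
      mul_nonneg (mul_nonneg ha hb) (sq_nonneg (x.2 - y.2))]
  have hc1 : 0 ≤ (8 * Real.pi * abar / vol) * (ρ * abar ^ 3) ^ ((1 : ℝ) / 4) := by
    have h8 : 0 ≤ 8 * Real.pi * abar / vol := by positivity
    have h9 : (0:ℝ) ≤ (ρ * abar ^ 3) ^ ((1 : ℝ) / 4) :=
      Real.rpow_nonneg (by positivity) _
    exact mul_nonneg h8 h9
  have hc2 : 0 ≤ vol ^ (-(3 : ℝ) / 2) * ((8 * Real.pi) ^ ((5 : ℝ) / 2)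
      * (2 * Real.sqrt 2 / (15 * Real.pi ^ 2))) := by
    have h1 : (0:ℝ) ≤ vol ^ (-(3 : ℝ) / 2) := Real.rpow_nonneg hvol.le _
    have h2 : (0:ℝ) ≤ (8 * Real.pi) ^ ((5 : ℝ) / 2) :=
      Real.rpow_nonneg (by positivity) _
    have h3 : (0:ℝ) ≤ 2 * Real.sqrt 2 / (15 * Real.pi ^ 2) := by positivity
    exact mul_nonneg h1 (mul_nonneg h2 h3)
  show Ffun aA aB aAB abar vol ρ μA μB (a • x + b • y).1 (a • x + b • y).2
    ≤ a • Ffun aA aB aAB abar vol ρ μA μB x.1 x.2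
      + b • Ffun aA aB aAB abar vol ρ μA μB y.1 y.2
  simp only [smul_eq_mul]
  rw [Ffun_eq hA hB hAB hmisc abar vol ρ μA μB (a • x + b • y) hz1 hz2,
    Ffun_eq hA hB hAB hmisc abar vol ρ μA μB x hx1 hx2,
    Ffun_eq hA hB hAB hmisc abar vol ρ μA μB y hy1 hy2]
  have h1 := mul_le_mul_of_nonneg_left hquad hc1
  have h2 := mul_le_mul_of_nonneg_left hphi hc2
  rw [hz1', hz2'] at h1 ⊢
  ring_nf
  ring_nf at h1 h2
  linarith [h1, h2]
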